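/- Let α ∈ ℝ⁶, with coordinates α_ij indexed by unordered pairs {i,j} ⊂ {1,2,3,4}, satisfy α_ij = α_kh and α_ij + α_ik + α_ih = π for every partition {i,j,k,h} = {1,2,3,4}. Then the function F_α : ℝ⁶ → ℝ, F_α(l) = cov(l) − Σ_{1≤i<j≤4} α_ij l_ij, is invariant under the ℝ⁴-action: F_α(w + l) = F_α(l) for all l ∈ ℝ⁶ and all w ∈ ℝ⁴. -/

import Mathlib

noncomputable section

open Real Set Filter

/-- The generalized Euclidean triangle angle `aᵢ(x)` opposite the side of length `x i`,
for a generalized triangle with (positive) side lengths `x 0, x 1, x 2`: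
it is `π` if `x i ≥ x j + x k`, `0` if some other side is at least the sum of the
remaining two, and otherwise the usual Euclidean angle `arccos((xⱼ²+x_k²−xᵢ²)/(2xⱼx_k))`. -/
noncomputable def genAngle (x : Fin 3 → ℝ) (i : Fin 3) : ℝ :=
  if x (i + 1) + x (i + 2) ≤ x i then Real.pi
  else if x i + x (i + 2) ≤ x (i + 1) ∨ x i + x (i + 1) ≤ x (i + 2) then 0
  else Real.arccos
    ((x (i + 1) ^ 2 + x (i + 2) ^ 2 - x i ^ 2) / (2 * x (i + 1) * x (i + 2)))

/-- The three side lengths `e^{(l₁₂+l₃₄)/2}, e^{(l₁₃+l₂₄)/2}, e^{(l₁₄+l₂₃)/2}` of the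
generalized Euclidean triangle associated to a length vector `l ∈ ℝ⁶`.
Edge indices: `0 ↔ {1,2}, 1 ↔ {1,3}, 2 ↔ {1,4}, 3 ↔ {2,3}, 4 ↔ {2,4}, 5 ↔ {3,4}`,
so opposite pairs of edges are `(0,5), (1,4), (2,3)`. -/
noncomputable def triSides (l : Fin 6 → ℝ) (k : Fin 3) : ℝ :=
  if k.val = 0 then Real.exp ((l 0 + l 5) / 2)
  else if k.val = 1 then Real.exp ((l 1 + l 4) / 2)
  else Real.exp ((l 2 + l 3) / 2)

/-- The quad (pair of opposite edges) containing the edge `p`. -/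
def quadIndex (p : Fin 6) : Fin 3 :=
  if p.val = 0 ∨ p.val = 5 then 0 else if p.val = 1 ∨ p.val = 4 then 1 else 2

/-- The extended dihedral angle `α_p(l)` of the generalized decorated tetrahedron with
length vector `l ∈ ℝ⁶` at the edge `p`. -/
noncomputable def dihedral (l : Fin 6 → ℝ) (p : Fin 6) : ℝ :=
  genAngle (triSides l) (quadIndex p)

/-- The edge index in `Fin 6` of the edge `{i,j}` of the tetrahedron on vertices `Fin 4`
(junk value for `i = j`). -/
def edgeOf (i j : Fin 4) : Fin 6 :=
  if (i.val = 0 ∧ j.val = 1) ∨ (i.val = 1 ∧ j.val = 0) then 0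
  else if (i.val = 0 ∧ j.val = 2) ∨ (i.val = 2 ∧ j.val = 0) then 1
  else if (i.val = 0 ∧ j.val = 3) ∨ (i.val = 3 ∧ j.val = 0) then 2
  else if (i.val = 1 ∧ j.val = 2) ∨ (i.val = 2 ∧ j.val = 1) then 3
  else if (i.val = 1 ∧ j.val = 3) ∨ (i.val = 3 ∧ j.val = 1) then 4
  else 5

/-- The two endpoints of the edge `p` of the tetrahedron. -/
def endPts (p : Fin 6) : Fin 4 × Fin 4 :=
  if p.val = 0 then (0, 1) else if p.val = 1 then (0, 2) else if p.val = 2 then (0, 3)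
  else if p.val = 3 then (1, 2) else if p.val = 4 then (1, 3) else (2, 3)

/-- The Lobachevsky function `Λ(x) = −∫₀ˣ ln|2 sin t| dt`. -/
noncomputable def lob (x : ℝ) : ℝ := -∫ t in (0:ℝ)..x, Real.log |2 * Real.sin t|

/-- The volume of the generalized decorated tetrahedron with length vector `l`. -/
noncomputable def vol6 (l : Fin 6 → ℝ) : ℝ := (1 / 2 : ℝ) * ∑ p : Fin 6, lob (dihedral l p)

/-- The co-volume function `cov(l) = 2 vol(l) + Σ α_p(l) l_p` on `ℝ⁶`. -/
noncomputable def cov6 (l : Fin 6 → ℝ) : ℝ := 2 * vol6 l + ∑ p : Fin 6, dihedral l p * l p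

/-- `𝓛 ⊂ ℝ⁶`: length vectors of genuine decorated ideal hyperbolic tetrahedra, i.e. those
whose associated generalized Euclidean triangle satisfies the strict triangle inequalities. -/
def Ldom : Set (Fin 6 → ℝ) :=
  {l | ∀ i : Fin 3, triSides l i < triSides l (i + 1) + triSides l (i + 2)}

/-- The action of `w ∈ ℝ⁴` on `l ∈ ℝ⁶`: `(w + l)_{ij} = l_{ij} + wᵢ + wⱼ`. -/
def act (w : Fin 4 → ℝ) (l : Fin 6 → ℝ) : Fin 6 → ℝ :=
  fun p => l p + w (endPts p).1 + w (endPts p).2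

/-- `ℝ̂⁴ = {w + 0 : w ∈ ℝ⁴} ⊂ ℝ⁶`. -/
def hatR4 : Set (Fin 6 → ℝ) := {x | ∃ w : Fin 4 → ℝ, x = act w 0}

/-- `i, j, k, h` are pairwise distinct, i.e. `{i,j,k,h} = {1,2,3,4}`. -/
def Distinct4 (i j k h : Fin 4) : Prop :=
  i ≠ j ∧ i ≠ k ∧ i ≠ h ∧ j ≠ k ∧ j ≠ h ∧ k ≠ h

/-!
The action multiplies all three sides `e^{(l_ij+l_kh)/2}` of the generalized triangle by
`e^{(w₁+w₂+w₃+w₄)/2}`, so the dihedral angles, and with them the volume, do not change. Hence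
`cov(w + l) - cov(l) = Σ_v w_v · (sum of α_ij(l) over the edges at v)`. The three edges at a vertex
lie in the three different pairs of opposite edges, so that sum is the angle sum of the
generalized triangle, `π`; by hypothesis the same holds for `α`, and the two changes cancel.
-/

/-- Law of cosines: the cosine of the angle opposite `a` in a triangle with sides `a, b, c`. -/
def cosAngle (a b c : ℝ) : ℝ := (b ^ 2 + c ^ 2 - a ^ 2) / (2 * b * c)

/-- Sixteen times the squared area of a triangle with sides `a, b, c` (Heron). -/
def heron (a b c : ℝ) : ℝ := (a + b + c) * (-a + b + c) * (a - b + c) * (a + b - c)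

lemma one_sub_cosAngle_sq {a b c : ℝ} (hb : b ≠ 0) (hc : c ≠ 0) :
    1 - cosAngle a b c ^ 2 = heron a b c / (2 * b * c) ^ 2 := by
  unfold cosAngle heron
  field_simp
  ring

lemma sqrt_one_sub_cosAngle_sq {a b c : ℝ} (hb : 0 < b) (hc : 0 < c) :
    √(1 - cosAngle a b c ^ 2) = √(heron a b c) / (2 * b * c) := by
  rw [one_sub_cosAngle_sq hb.ne' hc.ne', Real.sqrt_div' _ (by positivity),
    Real.sqrt_sq (by positivity)]

lemma cosAngle_mem_Ioo {a b c : ℝ} (hb : 0 < b) (hc : 0 < c) (hab : a < b + c) (hba : b < a + c)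
    (hca : c < a + b) : cosAngle a b c ∈ Ioo (-1) 1 := by
  have hbc : 0 < 2 * b * c := by positivity
  unfold cosAngle
  constructor
  · rw [lt_div_iff₀ hbc]; nlinarith
  · rw [div_lt_one hbc]; nlinarith

lemma arccos_add_arccos_add_arccos_eq_pi {x y z : ℝ} (hcos : cos (arccos x + arccos y) = -z)
    (hsin : 0 < sin (arccos x + arccos y)) : arccos x + arccos y + arccos z = π := by
  set A := arccos x + arccos y
  have hA_nonneg : 0 ≤ A := add_nonneg (arccos_nonneg x) (arccos_nonneg y)
  have hA_le : A ≤ π := by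
    by_contra! hA
    -- on `[π, 2π]` the sine is nonpositive
    have := sin_nonneg_of_nonneg_of_le_pi (x := A - π) (by linarith)
      (by linarith [arccos_le_pi x, arccos_le_pi y])
    rw [sin_sub_pi] at this
    linarith
  have := arccos_cos hA_nonneg hA_le
  rw [hcos, arccos_neg] at this
  linarith

theorem arccos_cosAngle_add_add_eq_pi {a b c : ℝ} (ha : 0 < a) (hb : 0 < b) (hc : 0 < c)
    (hab : a < b + c) (hba : b < a + c) (hca : c < a + b) :
    arccos (cosAngle a b c) + arccos (cosAngle b c a) + arccos (cosAngle c a b) = π := by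
  have hQ : 0 < heron a b c :=
    mul_pos (mul_pos (mul_pos (by linarith) (by linarith)) (by linarith)) (by linarith)
  have hS : √(heron a b c) ^ 2 = heron a b c := sq_sqrt hQ.le
  obtain ⟨hx₁, hx₂⟩ := cosAngle_mem_Ioo hb hc hab hba hca
  obtain ⟨hy₁, hy₂⟩ := cosAngle_mem_Ioo hc ha (by linarith) (by linarith) hab
  have hheron_bca : heron b c a = heron a b c := by unfold heron; ring
  apply arccos_add_arccos_add_arccos_eq_pi
  · rw [cos_add, cos_arccos hx₁.le hx₂.le, cos_arccos hy₁.le hy₂.le, sin_arccos, sin_arccos,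
      sqrt_one_sub_cosAngle_sq hb hc, sqrt_one_sub_cosAngle_sq hc ha, hheron_bca]
    unfold cosAngle
    field_simp
    rw [hS]
    unfold heron
    ring
  · have hsin : sin (arccos (cosAngle a b c) + arccos (cosAngle b c a)) =
        √(heron a b c) / (2 * a * b) := by
      rw [sin_add, cos_arccos hx₁.le hx₂.le, cos_arccos hy₁.le hy₂.le, sin_arccos, sin_arccos,
        sqrt_one_sub_cosAngle_sq hb hc, sqrt_one_sub_cosAngle_sq hc ha, hheron_bca]
      unfold cosAngle
      field_simp
      ring
    rw [hsin]
    positivity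

theorem sum_fin_three_rotate {M : Type*} [AddCommMonoid M] (f : Fin 3 → M) (i : Fin 3) :
    ∑ j, f j = f i + f (i + 1) + f (i + 2) := by
  rw [← Equiv.sum_comp (Equiv.addLeft i) f, Fin.sum_univ_three]
  simp only [Equiv.coe_addLeft, add_zero]

theorem add_add_eq_sum_of_card_eq_three {ι M : Type*} [Fintype ι] [DecidableEq ι]
    [AddCommMonoid M] (hι : Fintype.card ι = 3) (f : ι → M) {a b c : ι} (hab : a ≠ b)
    (hac : a ≠ c) (hbc : b ≠ c) : f a + f b + f c = ∑ j, f j := by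
  have huniv : ({a, b, c} : Finset ι) = Finset.univ :=
    Finset.eq_univ_of_card _
      ((Finset.card_eq_three.mpr ⟨a, b, c, hab, hac, hbc, rfl⟩).trans hι.symm)
  rw [← huniv, Finset.sum_insert (by simp [hab, hac]), Finset.sum_pair hbc, add_assoc]

lemma fin_three_add_rotations (i : Fin 3) :
    i + 1 + 1 = i + 2 ∧ i + 1 + 2 = i ∧ i + 2 + 1 = i ∧ i + 2 + 2 = i + 1 := by
  fin_cases i <;> decide

section genAngle

variable {x : Fin 3 → ℝ} {i : Fin 3}

lemma genAngle_of_add_le (h : x (i + 1) + x (i + 2) ≤ x i) : genAngle x i = π := by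
  rw [genAngle, if_pos h]

lemma genAngle_eq_zero (h₁ : ¬x (i + 1) + x (i + 2) ≤ x i)
    (h₂ : x i + x (i + 2) ≤ x (i + 1) ∨ x i + x (i + 1) ≤ x (i + 2)) : genAngle x i = 0 := by
  rw [genAngle, if_neg h₁, if_pos h₂]

lemma genAngle_of_forall_lt (h : ∀ j, x j < x (j + 1) + x (j + 2)) (i : Fin 3) :
    genAngle x i = arccos (cosAngle (x i) (x (i + 1)) (x (i + 2))) := by
  obtain ⟨e₁, e₂, e₃, e₄⟩ := fin_three_add_rotations i
  have h₁ := h (i + 1)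
  have h₂ := h (i + 2)
  rw [e₁, e₂] at h₁
  rw [e₃, e₄] at h₂
  rw [genAngle, if_neg (not_le.mpr (h i)), if_neg (by push Not; constructor <;> linarith),
    cosAngle]

lemma genAngle_rotate_of_add_le (hx : ∀ j, 0 < x j) (h : x (i + 1) + x (i + 2) ≤ x i) :
    genAngle x (i + 1) = 0 ∧ genAngle x (i + 2) = 0 := by
  obtain ⟨e₁, e₂, e₃, e₄⟩ := fin_three_add_rotations i
  have := hx (i + 1)
  have := hx (i + 2)
  constructor
  · refine genAngle_eq_zero (not_le.mpr ?_) (Or.inr ?_) <;> rw [e₁, e₂] <;> linarith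
  · refine genAngle_eq_zero (not_le.mpr ?_) (Or.inl ?_) <;> rw [e₃, e₄] <;> linarith

theorem sum_genAngle (hx : ∀ j, 0 < x j) : ∑ j, genAngle x j = π := by
  by_cases hdeg : ∃ i, x (i + 1) + x (i + 2) ≤ x i
  · obtain ⟨i, hi⟩ := hdeg
    obtain ⟨h₁, h₂⟩ := genAngle_rotate_of_add_le hx hi
    rw [sum_fin_three_rotate _ i, genAngle_of_add_le hi, h₁, h₂, add_zero, add_zero]
  · push Not at hdeg
    rw [Fin.sum_univ_three, genAngle_of_forall_lt hdeg, genAngle_of_forall_lt hdeg,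
      genAngle_of_forall_lt hdeg]
    have h₀ := hdeg 0
    have h₁ := hdeg 1
    have h₂ := hdeg 2
    simp only [Fin.isValue, Fin.reduceAdd] at h₀ h₁ h₂ ⊢
    exact arccos_cosAngle_add_add_eq_pi (hx 0) (hx 1) (hx 2) h₀ (by linarith) (by linarith)

lemma genAngle_smul {c : ℝ} (hc : 0 < c) (x : Fin 3 → ℝ) : genAngle (c • x) = genAngle x := by
  funext i
  have hle : ∀ a b d : ℝ, c * a + c * b ≤ c * d ↔ a + b ≤ d := fun a b d => by
    rw [← mul_add, mul_le_mul_iff_right₀ hc]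
  have hcos : ∀ a b d : ℝ, ((c * b) ^ 2 + (c * d) ^ 2 - (c * a) ^ 2) / (2 * (c * b) * (c * d))
      = (b ^ 2 + d ^ 2 - a ^ 2) / (2 * b * d) := fun a b d => by
    rw [← mul_div_mul_left (b ^ 2 + d ^ 2 - a ^ 2) (2 * b * d) (pow_ne_zero 2 hc.ne')]
    congr 1 <;> ring
  simp only [genAngle, Pi.smul_apply, smul_eq_mul, hle, hcos]

end genAngle

lemma triSides_pos (l : Fin 6 → ℝ) (k : Fin 3) : 0 < triSides l k := by
  unfold triSides
  split_ifs <;> exact exp_pos _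

/-- Each pair of opposite edges contains every vertex exactly once, so the action scales all
three sides of the triangle by the same factor. -/
lemma triSides_act (w : Fin 4 → ℝ) (l : Fin 6 → ℝ) :
    triSides (act w l) = exp ((w 0 + w 1 + w 2 + w 3) / 2) • triSides l := by
  funext k
  fin_cases k <;>
    simp only [triSides, act, endPts, Pi.smul_apply, smul_eq_mul, ← exp_add, Fin.isValue,
      Fin.coe_ofNat_eq_mod, Fin.reduceFinMk, Nat.reduceMod, Nat.reduceEqDiff, ↓reduceIte] <;>
    ring_nf

lemma dihedral_act (w : Fin 4 → ℝ) (l : Fin 6 → ℝ) : dihedral (act w l) = dihedral l := by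
  funext p
  rw [dihedral, dihedral, triSides_act, genAngle_smul (exp_pos _)]

lemma vol6_act (w : Fin 4 → ℝ) (l : Fin 6 → ℝ) : vol6 (act w l) = vol6 l := by
  rw [vol6, vol6, dihedral_act]

def HasVertexSums (β : Fin 6 → ℝ) (c : ℝ) : Prop :=
  ∀ i j k h : Fin 4, Distinct4 i j k h → β (edgeOf i j) + β (edgeOf i k) + β (edgeOf i h) = c

lemma quadIndex_edgeOf_pairwise_ne {i j k h : Fin 4} (hd : Distinct4 i j k h) :
    quadIndex (edgeOf i j) ≠ quadIndex (edgeOf i k) ∧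
      quadIndex (edgeOf i j) ≠ quadIndex (edgeOf i h) ∧
      quadIndex (edgeOf i k) ≠ quadIndex (edgeOf i h) := by
  revert i j k h
  unfold Distinct4
  decide

theorem hasVertexSums_dihedral (l : Fin 6 → ℝ) : HasVertexSums (dihedral l) π := by
  intro i j k h hd
  obtain ⟨hjk, hjh, hkh⟩ := quadIndex_edgeOf_pairwise_ne hd
  rw [dihedral, dihedral, dihedral,
    add_add_eq_sum_of_card_eq_three (Fintype.card_fin 3) _ hjk hjh hkh]
  exact sum_genAngle (triSides_pos l)

theorem sum_mul_act_of_hasVertexSums {β : Fin 6 → ℝ} {c : ℝ} (hβ : HasVertexSums β c)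
    (w : Fin 4 → ℝ) (l : Fin 6 → ℝ) :
    ∑ p, β p * act w l p = ∑ p, β p * l p + c * (w 0 + w 1 + w 2 + w 3) := by
  have h₀ : β 0 + β 1 + β 2 = c := hβ 0 1 2 3 (by unfold Distinct4; decide)
  have h₁ : β 0 + β 3 + β 4 = c := hβ 1 0 2 3 (by unfold Distinct4; decide)
  have h₂ : β 1 + β 3 + β 5 = c := hβ 2 0 1 3 (by unfold Distinct4; decide)
  have h₃ : β 2 + β 4 + β 5 = c := hβ 3 0 1 2 (by unfold Distinct4; decide)
  simp only [act, endPts, Fin.sum_univ_six, Fin.isValue, Fin.coe_ofNat_eq_mod, Nat.reduceMod,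
    Nat.reduceEqDiff, ↓reduceIte]
  linear_combination w 0 * h₀ + w 1 * h₁ + w 2 * h₂ + w 3 * h₃

theorem Falpha_invariant_under_action_general (α : Fin 6 → ℝ)
    (hsum : ∀ i j k h : Fin 4, Distinct4 i j k h →
      α (edgeOf i j) + α (edgeOf i k) + α (edgeOf i h) = Real.pi) :
    ∀ (l : Fin 6 → ℝ) (w : Fin 4 → ℝ),
      cov6 (act w l) - ∑ p : Fin 6, α p * act w l p
        = cov6 l - ∑ p : Fin 6, α p * l p := by
  intro l w
  rw [cov6, cov6, vol6_act, sum_mul_act_of_hasVertexSums hsum, dihedral_act,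
    sum_mul_act_of_hasVertexSums (hasVertexSums_dihedral l)]
  ring

/-- if `α ∈ ℝ⁶` has equal opposite entries and vertex sums `π`, then
`F_α(l) = cov(l) − α·l` is invariant under the `ℝ⁴`-action on `ℝ⁶`. -/
theorem Falpha_invariant_under_action (α : Fin 6 → ℝ)
    (hopp : ∀ i j k h : Fin 4, Distinct4 i j k h → α (edgeOf i j) = α (edgeOf k h))
    (hsum : ∀ i j k h : Fin 4, Distinct4 i j k h →
      α (edgeOf i j) + α (edgeOf i k) + α (edgeOf i h) = Real.pi) :
    ∀ (l : Fin 6 → ℝ) (w : Fin 4 → ℝ),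
      cov6 (act w l) - ∑ p : Fin 6, α p * act w l p
        = cov6 l - ∑ p : Fin 6, α p * l p :=
  Falpha_invariant_under_action_general α hsum
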